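/- For any simple N-party holographic graph model G and any subsystem Y ⊆ ⟦N⟧ with |Y| ≥ 2, if I(Y_1:Y_2) > 0 for every bipartition of Y into disjoint nonempty parts Y_1, Y_2 with Y_1 ∪ Y_2 = Y, then the subgraph G_Y induced by the minimal min-cut for Y is connected. -/

import Mathlib

namespace HEC

/-- The parties `⟦N⟧ = {0,1,…,N}`, where `0` is the purifier. -/
abbrev Party (N : ℕ) := Fin (N + 1)

/-- A collection of parties. -/
abbrev PSet (N : ℕ) := Finset (Party N)

/-- An `N`-party holographic graph model: a finite weighted graph with no loops or
multiple edges (encoded by a symmetric nonnegative weight function whose support is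
the edge set, so that every edge has strictly positive weight and the diagonal
vanishes), together with a labeling of the boundary vertices (those with
`label v = some ℓ`) by parties in `⟦N⟧` such that every party labels at least one
boundary vertex. -/
structure GraphModel (N : ℕ) where
  V : Type
  [fintypeV : Fintype V]
  [decEqV : DecidableEq V]
  w : V → V → ℝ
  w_symm : ∀ u v : V, w u v = w v u
  w_loopless : ∀ v : V, w v v = 0
  w_nonneg : ∀ u v : V, 0 ≤ w u v
  label : V → Option (Party N)
  label_surj : ∀ ℓ : Party N, ∃ v : V, label v = some ℓ

attribute [instance] GraphModel.fintypeV GraphModel.decEqV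

/-- `C` is a `Y`-cut: its intersection with the boundary vertices consists exactly of
the boundary vertices labeled by parties in `Y`. -/
def IsCut {N : ℕ} (G : GraphModel N) (Y : PSet N) (C : Finset G.V) : Prop :=
  ∀ v : G.V, ∀ ℓ : Party N, G.label v = some ℓ → (v ∈ C ↔ ℓ ∈ Y)

/-- The cost `‖C‖` of a cut: the total weight of the edges with exactly one endpoint
in `C`. -/
def cutCost {N : ℕ} (G : GraphModel N) (C : Finset G.V) : ℝ :=
  ∑ u ∈ C, ∑ v ∈ Cᶜ, G.w u v

/-- `C` is a min-cut for `Y`: a `Y`-cut of minimal cost among all `Y`-cuts. -/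
def IsMinCut {N : ℕ} (G : GraphModel N) (Y : PSet N) (C : Finset G.V) : Prop :=
  IsCut G Y C ∧ ∀ C' : Finset G.V, IsCut G Y C' → cutCost G C ≤ cutCost G C'

/-- `C` is a minimal min-cut for `Y`: a min-cut for `Y` which is minimal with respect
to set inclusion among all min-cuts for `Y`. -/
def IsMinimalMinCut {N : ℕ} (G : GraphModel N) (Y : PSet N) (C : Finset G.V) : Prop :=
  IsMinCut G Y C ∧ ∀ C' : Finset G.V, IsMinCut G Y C' → C' ⊆ C → C' = C

/-- The min-cut entropy `S_Y`: the minimum of `‖C‖` over all `Y`-cuts. -/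
noncomputable def gEntropy {N : ℕ} (G : GraphModel N) (Y : PSet N) : ℝ :=
  sInf (cutCost G '' {C : Finset G.V | IsCut G Y C})

/-- The mutual information `I(Y:Z) = S_Y + S_Z - S_{Y∪Z}` computed from min-cuts. -/
noncomputable def gMI {N : ℕ} (G : GraphModel N) (Y Z : PSet N) : ℝ :=
  gEntropy G Y + gEntropy G Z - gEntropy G (Y ∪ Z)

/-- Reachability inside the subgraph of `G` induced by the vertex set `C`. -/
def Reaches {N : ℕ} (G : GraphModel N) (C : Finset G.V) : G.V → G.V → Prop :=
  Relation.ReflTransGen (fun a b => a ∈ C ∧ b ∈ C ∧ 0 < G.w a b)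

/-- `D` is the vertex set of a connected component of the subgraph of `G` induced
by `C`. -/
def IsCompOf {N : ℕ} (G : GraphModel N) (C D : Finset G.V) : Prop :=
  ∃ v ∈ C, ∀ u : G.V, u ∈ D ↔ (u ∈ C ∧ Reaches G C v u)

/-- The graph model is simple: the labeling is a bijection between the boundary
vertices and `⟦N⟧`, i.e. every party labels exactly one vertex. -/
def IsSimple {N : ℕ} (G : GraphModel N) : Prop :=
  ∀ ℓ : Party N, ∃! v : G.V, G.label v = some ℓ

/-- The underlying simple graph of a graph model: an edge wherever the weight is
strictly positive. -/
def GraphModel.toSimpleGraph {N : ℕ} (G : GraphModel N) : SimpleGraph G.V where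
  Adj u v := 0 < G.w u v
  symm := by
    constructor
    intro u v h
    beta_reduce at h ⊢
    rw [G.w_symm v u]
    exact h
  loopless := by
    constructor
    intro v h
    beta_reduce at h
    rw [G.w_loopless v] at h
    exact lt_irrefl 0 h

lemma cutCost_nonneg {N : ℕ} (G : GraphModel N) (C : Finset G.V) : 0 ≤ cutCost G C :=
  Finset.sum_nonneg fun u _ => Finset.sum_nonneg fun v _ => G.w_nonneg u v

lemma gEntropy_le {N : ℕ} (G : GraphModel N) {Y : PSet N} {C : Finset G.V}
    (h : IsCut G Y C) : gEntropy G Y ≤ cutCost G C :=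
  csInf_le (Set.Finite.bddBelow (Set.Finite.image _ (Set.toFinite _))) ⟨C, h, rfl⟩

lemma gEntropy_eq {N : ℕ} (G : GraphModel N) {Y : PSet N} {C : Finset G.V}
    (h : IsMinCut G Y C) : gEntropy G Y = cutCost G C := by
  refine le_antisymm (gEntropy_le G h.1) ?_
  refine le_csInf ⟨cutCost G C, C, h.1, rfl⟩ ?_
  rintro b ⟨C', hC', rfl⟩
  exact h.2 C' hC'

lemma cutCost_split {N : ℕ} (G : GraphModel N) {C D : Finset G.V} (hDC : D ⊆ C)
    (h0 : ∀ x ∈ D, ∀ y ∈ C \ D, G.w x y = 0) :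
    cutCost G C = cutCost G D + cutCost G (C \ D) := by
  classical
  have hDc : Dᶜ \ Cᶜ = C \ D := by
    ext x
    simp only [Finset.mem_sdiff, Finset.mem_compl]
    tauto
  have hCDc : (C \ D)ᶜ \ Cᶜ = D := by
    ext x
    simp only [Finset.mem_sdiff, Finset.mem_compl, not_and, not_not]
    constructor
    · rintro ⟨h1, h2⟩; exact h1 h2
    · intro h; exact ⟨fun _ => h, hDC h⟩
  have e1 : cutCost G D = ∑ x ∈ D, ∑ y ∈ Cᶜ, G.w x y := by
    unfold cutCost
    refine Finset.sum_congr rfl fun x hx => ?_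
    calc ∑ y ∈ Dᶜ, G.w x y
        = ∑ y ∈ Dᶜ \ Cᶜ, G.w x y + ∑ y ∈ Cᶜ, G.w x y :=
          (Finset.sum_sdiff (Finset.compl_subset_compl.mpr hDC)).symm
      _ = ∑ y ∈ Cᶜ, G.w x y := by
          rw [hDc, Finset.sum_eq_zero (h0 x hx), zero_add]
  have e2 : cutCost G (C \ D) = ∑ x ∈ C \ D, ∑ y ∈ Cᶜ, G.w x y := by
    unfold cutCost
    refine Finset.sum_congr rfl fun x hx => ?_
    have hsub : Cᶜ ⊆ (C \ D)ᶜ := Finset.compl_subset_compl.mpr (Finset.sdiff_subset)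
    calc ∑ y ∈ (C \ D)ᶜ, G.w x y
        = ∑ y ∈ (C \ D)ᶜ \ Cᶜ, G.w x y + ∑ y ∈ Cᶜ, G.w x y :=
          (Finset.sum_sdiff hsub).symm
      _ = ∑ y ∈ Cᶜ, G.w x y := by
          rw [hCDc, Finset.sum_eq_zero fun y hy => by
            rw [G.w_symm]; exact h0 y hy x hx, zero_add]
  rw [e1, e2]
  unfold cutCost
  rw [← Finset.sum_sdiff hDC (f := fun x => ∑ y ∈ Cᶜ, G.w x y)]
  ring

/-- For any simple graph model `G` and subsystem `Y` with `|Y| ≥ 2`,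
if `I(Y₁:Y₂) > 0` for every bipartition of `Y` into disjoint nonempty parts, then the
subgraph `G_Y` induced by the minimal min-cut for `Y` is connected. -/
theorem statement17 {N : ℕ} (hN : 2 ≤ N) (G : GraphModel N) (hG : IsSimple G)
    (Y : PSet N) (hY : 2 ≤ Y.card)
    (hpos : ∀ Y₁ Y₂ : PSet N, Y₁.Nonempty → Y₂.Nonempty → Disjoint Y₁ Y₂ →
      Y₁ ∪ Y₂ = Y → 0 < gMI G Y₁ Y₂)
    (C : Finset G.V) (hC : IsMinimalMinCut G Y C) :
    ∀ u ∈ C, ∀ v ∈ C, Reaches G C u v := by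
  classical
  intro u hu v hv
  by_contra hreach
  set D : Finset G.V := C.filter (fun x => Reaches G C u x) with hDdef
  have huD : u ∈ D := Finset.mem_filter.mpr ⟨hu, Relation.ReflTransGen.refl⟩
  have hvD : v ∈ C \ D :=
    Finset.mem_sdiff.mpr ⟨hv, fun h => hreach (Finset.mem_filter.mp h).2⟩
  have hDC : D ⊆ C := Finset.filter_subset _ _
  have h0 : ∀ x ∈ D, ∀ y ∈ C \ D, G.w x y = 0 := by
    intro x hx y hy
    rcases Finset.mem_filter.mp hx with ⟨hxC, hrx⟩
    rcases Finset.mem_sdiff.mp hy with ⟨hyC, hyD⟩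
    by_contra hne
    have hw : 0 < G.w x y := lt_of_le_of_ne (G.w_nonneg x y) (Ne.symm hne)
    exact hyD (Finset.mem_filter.mpr ⟨hyC, hrx.tail ⟨hxC, hyC, hw⟩⟩)
  have hsplit := cutCost_split G hDC h0
  set Y₁ : PSet N := Finset.univ.filter (fun ℓ => ∃ x ∈ D, G.label x = some ℓ) with hY₁
  set Y₂ : PSet N := Finset.univ.filter (fun ℓ => ∃ x ∈ C \ D, G.label x = some ℓ) with hY₂
  have huniq : ∀ (x x' : G.V) (ℓ : Party N),
      G.label x = some ℓ → G.label x' = some ℓ → x = x' := by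
    intro x x' ℓ hx hx'
    obtain ⟨b, -, hb⟩ := hG ℓ
    exact (hb x hx).trans (hb x' hx').symm
  have hcut1 : IsCut G Y₁ D := by
    intro x ℓ hl
    simp only [hY₁, Finset.mem_filter, Finset.mem_univ, true_and]
    constructor
    · intro hx; exact ⟨x, hx, hl⟩
    · rintro ⟨x', hx', hl'⟩
      rwa [huniq x x' ℓ hl hl'] 
  have hcut2 : IsCut G Y₂ (C \ D) := by
    intro x ℓ hl
    simp only [hY₂, Finset.mem_filter, Finset.mem_univ, true_and]
    constructor
    · intro hx; exact ⟨x, hx, hl⟩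
    · rintro ⟨x', hx', hl'⟩
      rwa [huniq x x' ℓ hl hl']
  have hCY : IsCut G Y C := hC.1.1
  have hY12 : Y₁ ∪ Y₂ = Y := by
    ext ℓ
    simp only [Finset.mem_union, hY₁, hY₂, Finset.mem_filter, Finset.mem_univ, true_and]
    constructor
    · rintro (⟨x, hx, hl⟩ | ⟨x, hx, hl⟩)
      · exact (hCY x ℓ hl).mp (hDC hx)
      · exact (hCY x ℓ hl).mp (Finset.mem_sdiff.mp hx).1
    · intro hℓ
      obtain ⟨b, hb⟩ := G.label_surj ℓ
      have hbC : b ∈ C := (hCY b ℓ hb).mpr hℓ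
      by_cases hbD : b ∈ D
      · exact Or.inl ⟨b, hbD, hb⟩
      · exact Or.inr ⟨b, Finset.mem_sdiff.mpr ⟨hbC, hbD⟩, hb⟩
  have hdisj : Disjoint Y₁ Y₂ := by
    rw [Finset.disjoint_left]
    intro ℓ h1 h2
    simp only [hY₁, hY₂, Finset.mem_filter, Finset.mem_univ, true_and] at h1 h2
    obtain ⟨x, hx, hl⟩ := h1
    obtain ⟨x', hx', hl'⟩ := h2
    rw [huniq x x' ℓ hl hl'] at hx
    exact (Finset.mem_sdiff.mp hx').2 hx
  by_cases h1 : Y₁.Nonempty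
  · by_cases h2 : Y₂.Nonempty
    · have hmi := hpos Y₁ Y₂ h1 h2 hdisj hY12
      have hS : gEntropy G (Y₁ ∪ Y₂) = cutCost G C := by
        rw [hY12]; exact gEntropy_eq G hC.1
      have hle1 : gEntropy G Y₁ ≤ cutCost G D := gEntropy_le G hcut1
      have hle2 : gEntropy G Y₂ ≤ cutCost G (C \ D) := gEntropy_le G hcut2
      unfold gMI at hmi
      rw [hS] at hmi
      linarith
    · -- Y₂ empty, so Y₁ = Y and D is a Y-cut not larger in cost than C
      rw [Finset.not_nonempty_iff_eq_empty] at h2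
      rw [h2, Finset.union_empty] at hY12
      rw [hY12] at hcut1
      have hmin : IsMinCut G Y D := by
        refine ⟨hcut1, fun C' hC' => le_trans ?_ (hC.1.2 C' hC')⟩
        have := cutCost_nonneg G (C \ D)
        linarith
      have heq := hC.2 D hmin hDC
      rw [heq] at hvD
      exact (Finset.mem_sdiff.mp hvD).2 (Finset.mem_sdiff.mp hvD).1
  · -- Y₁ empty, so Y₂ = Y and C \ D is a Y-cut not larger in cost than C
    rw [Finset.not_nonempty_iff_eq_empty] at h1
    rw [h1, Finset.empty_union] at hY12
    rw [hY12] at hcut2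
    have hmin : IsMinCut G Y (C \ D) := by
      refine ⟨hcut2, fun C' hC' => le_trans ?_ (hC.1.2 C' hC')⟩
      have := cutCost_nonneg G D
      linarith
    have heq := hC.2 (C \ D) hmin (Finset.sdiff_subset)
    have : u ∈ C \ D := by rw [heq]; exact hu
    exact (Finset.mem_sdiff.mp this).2 huD

end HEC
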